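/- Let B be symmetric positive definite, s ∈ ℝⁿ with s ≠ 0, and y ∈ ℝⁿ with yᵀs > 0. Then the BFGS update B' = B - (1/(sᵀBs)) B s sᵀ B + (1/(yᵀs)) y yᵀ is symmetric positive definite. -/

import Mathlib

/-!
With `b = sᵀBx` and `c = sᵀBs`, the quadratic form of the update is
`xᵀB'x = zᵀBz + (yᵀx)² / (yᵀs)` for `z = x - (b / c) s`, the `B`-orthogonal projection of `x`
off `s`. Both terms are nonnegative, and the first vanishes only when `x = t s`, in which case
the second is `t² (yᵀs) > 0`.
-/

open Matrix

namespace Matrix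

variable {ι K : Type*} [Fintype ι]

section CommSemiring

variable [CommSemiring K]

theorem IsSymm.dotProduct_mulVec_comm {A : Matrix ι ι K} (hA : A.IsSymm) (u v : ι → K) :
    u ⬝ᵥ A *ᵥ v = v ⬝ᵥ A *ᵥ u := by
  rw [dotProduct_mulVec, ← mulVec_transpose, hA.eq, dotProduct_comm]

theorem IsSymm.mul_vecMulVec_self_mul {A : Matrix ι ι K} (hA : A.IsSymm) (s : ι → K) :
    A * vecMulVec s s * A = vecMulVec (A *ᵥ s) (A *ᵥ s) := by
  rw [mul_vecMulVec, vecMulVec_mul, ← mulVec_transpose, hA.eq]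

theorem dotProduct_vecMulVec_self_mulVec (u x : ι → K) :
    x ⬝ᵥ vecMulVec u u *ᵥ x = (u ⬝ᵥ x) ^ 2 := by
  rw [vecMulVec_mulVec, op_smul_eq_smul, dotProduct_smul, smul_eq_mul, dotProduct_comm, sq]

end CommSemiring

section Field

variable [Field K]

def bfgsUpdate (B : Matrix ι ι K) (s y : ι → K) : Matrix ι ι K :=
  B - (1 / (s ⬝ᵥ B *ᵥ s)) • (B * vecMulVec s s * B) + (1 / (y ⬝ᵥ s)) • vecMulVec y y

variable {B : Matrix ι ι K}

theorem IsSymm.bfgsUpdate (hB : B.IsSymm) (s y : ι → K) : (bfgsUpdate B s y).IsSymm := by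
  rw [Matrix.bfgsUpdate, hB.mul_vecMulVec_self_mul]
  have hvv (u : ι → K) : (vecMulVec u u).IsSymm := transpose_vecMulVec u u
  exact (hB.sub ((hvv _).smul _)).add ((hvv _).smul _)

theorem IsSymm.dotProduct_bfgsUpdate_mulVec (hB : B.IsSymm) (s y x : ι → K) :
    x ⬝ᵥ Matrix.bfgsUpdate B s y *ᵥ x =
      x ⬝ᵥ B *ᵥ x - (s ⬝ᵥ B *ᵥ x) ^ 2 / (s ⬝ᵥ B *ᵥ s) + (y ⬝ᵥ x) ^ 2 / (y ⬝ᵥ s) := by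
  rw [Matrix.bfgsUpdate, hB.mul_vecMulVec_self_mul, add_mulVec, sub_mulVec, smul_mulVec,
    smul_mulVec, dotProduct_add, dotProduct_sub, dotProduct_smul, dotProduct_smul,
    dotProduct_vecMulVec_self_mulVec, dotProduct_vecMulVec_self_mulVec, dotProduct_comm (B *ᵥ s),
    hB.dotProduct_mulVec_comm x s]
  simp only [smul_eq_mul]
  ring

/-- For `sᵀBs = 0` both sides reduce to `xᵀBx`, since then `sᵀBx / 0 = 0`. -/
theorem IsSymm.dotProduct_mulVec_sub_div_smul (hB : B.IsSymm) (s x : ι → K) :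
    (x - (s ⬝ᵥ B *ᵥ x / s ⬝ᵥ B *ᵥ s) • s) ⬝ᵥ B *ᵥ (x - (s ⬝ᵥ B *ᵥ x / s ⬝ᵥ B *ᵥ s) • s) =
      x ⬝ᵥ B *ᵥ x - (s ⬝ᵥ B *ᵥ x) ^ 2 / (s ⬝ᵥ B *ᵥ s) := by
  simp only [mulVec_sub, mulVec_smul, sub_dotProduct, dotProduct_sub, dotProduct_smul,
    smul_dotProduct, smul_eq_mul, hB.dotProduct_mulVec_comm x s]
  rcases eq_or_ne (s ⬝ᵥ B *ᵥ s) 0 with hc | hc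
  · simp [hc]
  · field_simp
    ring

end Field

theorem PosDef.bfgsUpdate [Field K] [LinearOrder K] [IsStrictOrderedRing K] [StarRing K]
    [TrivialStar K] {B : Matrix ι ι K} (hB : B.PosDef) {s y : ι → K} (hys : 0 < y ⬝ᵥ s) :
    (Matrix.bfgsUpdate B s y).PosDef := by
  have hBsymm : B.IsSymm := isHermitian_iff_isSymm.mp hB.isHermitian
  refine posDef_iff_dotProduct_mulVec.mpr
    ⟨isHermitian_iff_isSymm.mpr (hBsymm.bfgsUpdate s y), fun x hx ↦ ?_⟩
  rw [star_trivial, hBsymm.dotProduct_bfgsUpdate_mulVec, ← hBsymm.dotProduct_mulVec_sub_div_smul]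
  set r := s ⬝ᵥ B *ᵥ x / s ⬝ᵥ B *ᵥ s
  rcases eq_or_ne (x - r • s) 0 with hz | hz
  · have hxs : x = r • s := sub_eq_zero.mp hz
    have hyx : y ⬝ᵥ x ≠ 0 := by
      rw [hxs, dotProduct_smul, smul_eq_mul]
      exact mul_ne_zero (left_ne_zero_of_smul (hxs ▸ hx)) hys.ne'
    rw [hz, zero_dotProduct, zero_add]
    positivity
  · have hzBz := hB.dotProduct_mulVec_pos hz
    rw [star_trivial] at hzBz
    exact add_pos_of_pos_of_nonneg hzBz (by positivity)

end Matrix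

theorem bfgs_update_posDef_general {n : ℕ} (B : Matrix (Fin n) (Fin n) ℝ)
    (hB : B.PosDef) (s y : Fin n → ℝ) (hys : 0 < y ⬝ᵥ s) :
    (B - (1 / (s ⬝ᵥ B *ᵥ s)) • (B * vecMulVec s s * B)
       + (1 / (y ⬝ᵥ s)) • vecMulVec y y).PosDef :=
  hB.bfgsUpdate hys

theorem bfgs_update_posDef {n : ℕ} (B : Matrix (Fin n) (Fin n) ℝ)
    (hB : B.PosDef) (s y : Fin n → ℝ) (hs : s ≠ 0) (hys : 0 < y ⬝ᵥ s) :
    (B - (1 / (s ⬝ᵥ B *ᵥ s)) • (B * vecMulVec s s * B)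
       + (1 / (y ⬝ᵥ s)) • vecMulVec y y).PosDef :=
  bfgs_update_posDef_general B hB s y hys
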